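/- arXiv:1802.05623 — 6 statements merged into one kernel-verified Lean document; each statement's English description precedes it below -/
import Mathlib

section
/- For every vertex v and every i ∈ ℕ, the weight of v at consecutive levels satisfies W_v(i) ≤ (β + 1)·W_v(i + 1). -/
open scoped Classical

/-- `D_v(i)`: the number of neighbors of `v` whose level equals `i`. -/
noncomputable def levelCount {V : Type*} [Fintype V] (G : SimpleGraph V)
    (ℓ : V → ℕ) (v : V) (i : ℕ) : ℕ :=
  (Finset.univ.filter fun u => G.Adj v u ∧ ℓ u = i).card

/-- `D_v(i, j)`: the number of neighbors of `v` whose level lies in `[i, j]`. -/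
noncomputable def levelCountRange {V : Type*} [Fintype V] (G : SimpleGraph V)
    (ℓ : V → ℕ) (v : V) (i j : ℕ) : ℕ :=
  (Finset.univ.filter fun u => G.Adj v u ∧ i ≤ ℓ u ∧ ℓ u ≤ j).card

/-- The weight of a vertex `v`:
`W_v = min{k_v, D_v(0, ℓ(v))}·μ·β^(−ℓ(v)) + Σ_{i > ℓ(v)} min{k_v, D_v(i)}·μ·β^(−i)`. -/
noncomputable def vertexWeight {V : Type*} [Fintype V] (G : SimpleGraph V)
    (β μ : ℝ) (k : V → ℕ) (ℓ : V → ℕ) (v : V) : ℝ :=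
  (min (k v) (levelCountRange G ℓ v 0 (ℓ v)) : ℝ) * μ * β ^ (-(ℓ v : ℤ))
    + ∑' i : ℕ, if ℓ v < i then (min (k v) (levelCount G ℓ v i) : ℝ) * μ * β ^ (-(i : ℤ)) else 0

/-!
Raising the level of `v` from `i` to `i + 1` moves the level-`(i + 1)` summand of the tail into the
head term. Both the old head count `min{k_v, D_v(0, i)}` and the moved count `min{k_v, D_v(i + 1)}`
are at most the new head count `min{k_v, D_v(0, i + 1)}`, while the old head scale `β^(-i)` is `β`
times the new one; so the old weight is at most `β + 1` copies of the new head plus the unchanged,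
nonnegative tail.
-/

theorem tsum_ite_lt_eq_add {α : Type*} [AddCommGroup α] [UniformSpace α] [IsUniformAddGroup α]
    [CompleteSpace α] [T2Space α] {f : ℕ → α} (hf : Summable f) (i : ℕ) :
    (∑' j, if i < j then f j else 0) = f (i + 1) + ∑' j, if i + 1 < j then f j else 0 := by
  have hg : Summable fun j => if i < j then f j else 0 := by
    convert hf.indicator {j | i < j} using 1
    ext j
    simp [Set.indicator_apply]
  rw [hg.tsum_eq_add_tsum_ite (i + 1), if_pos i.lt_succ_self]
  congr 1
  refine tsum_congr fun j => ?_
  split_ifs <;> first | rfl | omega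

theorem zpow_neg_natCast_eq_mul_zpow_neg_succ {K : Type*} [Field K] {β : K} (hβ : β ≠ 0) (i : ℕ) :
    β ^ (-(i : ℤ)) = β * β ^ (-((i + 1 : ℕ) : ℤ)) := by
  rw [Nat.cast_succ, neg_add', zpow_sub_one₀ hβ]
  field_simp

section LevelCounts

variable {V : Type*} [Fintype V] (G : SimpleGraph V) (ℓ : V → ℕ) (v : V)

theorem levelCount_update_self (m j : ℕ) :
    levelCount G (Function.update ℓ v m) v j = levelCount G ℓ v j := by
  unfold levelCount
  congr 1
  refine Finset.filter_congr fun u _ => and_congr_right fun huv => ?_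
  rw [Function.update_of_ne huv.ne']

theorem levelCountRange_update_self (m i j : ℕ) :
    levelCountRange G (Function.update ℓ v m) v i j = levelCountRange G ℓ v i j := by
  unfold levelCountRange
  congr 1
  refine Finset.filter_congr fun u _ => and_congr_right fun huv => ?_
  rw [Function.update_of_ne huv.ne']

theorem levelCount_eq_zero {j : ℕ} (hj : ∀ u, ℓ u ≠ j) : levelCount G ℓ v j = 0 := by
  simp [levelCount, hj]

theorem levelCountRange_mono_right {i j j' : ℕ} (hj : j ≤ j') :
    levelCountRange G ℓ v i j ≤ levelCountRange G ℓ v i j' :=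
  Finset.card_le_card <| Finset.monotone_filter_right _ fun _ _ ⟨hadj, hi, hle⟩ =>
    ⟨hadj, hi, hle.trans hj⟩

theorem levelCount_le_levelCountRange {i j : ℕ} (hij : i ≤ j) :
    levelCount G ℓ v j ≤ levelCountRange G ℓ v i j :=
  Finset.card_le_card <| Finset.monotone_filter_right _ fun _ _ ⟨hadj, hj⟩ =>
    ⟨hadj, hj ▸ hij, hj.le⟩

end LevelCounts

section Weight

variable {V : Type*} [Fintype V] (G : SimpleGraph V) (β μ : ℝ) (k ℓ : V → ℕ) (v : V)

noncomputable def levelTerm (j : ℕ) : ℝ :=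
  (min (k v) (levelCount G ℓ v j) : ℝ) * μ * β ^ (-(j : ℤ))

theorem summable_levelTerm : Summable (levelTerm G β μ k ℓ v) := by
  refine summable_of_ne_finset_zero (s := Finset.univ.image ℓ) fun j hj => ?_
  have hj' : ∀ u, ℓ u ≠ j := fun u hu => hj (Finset.mem_image.2 ⟨u, Finset.mem_univ u, hu⟩)
  simp [levelTerm, levelCount_eq_zero G ℓ v hj']

theorem vertexWeight_update_self (m : ℕ) :
    vertexWeight G β μ k (Function.update ℓ v m) v
      = (min (k v) (levelCountRange G ℓ v 0 m) : ℝ) * μ * β ^ (-(m : ℤ))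
        + ∑' j, if m < j then levelTerm G β μ k ℓ v j else 0 := by
  simp only [vertexWeight, levelTerm, Function.update_self, levelCount_update_self,
    levelCountRange_update_self]

end Weight

theorem weight_consecutive_levels_general {V : Type*} [Fintype V] (G : SimpleGraph V)
    (c : V → ℝ) (k : V → ℕ) (β μ : ℝ) (ℓ : V → ℕ)
    (hc : ∀ v, 0 < c v) (hβ : 1 < β) (hμ : ∀ v, c v < μ) :
    ∀ (v : V) (i : ℕ),
      vertexWeight G β μ k (Function.update ℓ v i) v
        ≤ (β + 1) * vertexWeight G β μ k (Function.update ℓ v (i + 1)) v := by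
  intro v i
  have hμ0 : 0 ≤ μ := ((hc v).trans (hμ v)).le
  have hβ0 : 0 < β := one_pos.trans hβ
  set A : ℝ := min (k v : ℝ) (levelCountRange G ℓ v 0 (i + 1))
  set q : ℝ := β ^ (-((i + 1 : ℕ) : ℤ))
  set T : ℝ := ∑' j, if i + 1 < j then levelTerm G β μ k ℓ v j else 0
  have hT : 0 ≤ T := tsum_nonneg fun j => by
    unfold levelTerm; split_ifs <;> positivity
  have hlow : min (k v : ℝ) (levelCountRange G ℓ v 0 i) ≤ A :=
    min_le_min le_rfl (by exact_mod_cast levelCountRange_mono_right G ℓ v i.le_succ)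
  have hnext : min (k v : ℝ) (levelCount G ℓ v (i + 1)) ≤ A :=
    min_le_min le_rfl (by exact_mod_cast levelCount_le_levelCountRange G ℓ v (Nat.zero_le _))
  rw [vertexWeight_update_self, vertexWeight_update_self,
    tsum_ite_lt_eq_add (summable_levelTerm G β μ k ℓ v), levelTerm,
    zpow_neg_natCast_eq_mul_zpow_neg_succ hβ0.ne']
  calc _ = β * (min (k v : ℝ) (levelCountRange G ℓ v 0 i) * μ * q)
          + min (k v : ℝ) (levelCount G ℓ v (i + 1)) * μ * q + T := by ring
    _ ≤ β * (A * μ * q) + A * μ * q + (β * T + T) := by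
        gcongr
        linarith [mul_nonneg hβ0.le hT]
    _ = (β + 1) * (A * μ * q + T) := by ring

/-- For every vertex `v` and every `i ∈ ℕ`, the weight of `v` at consecutive levels satisfies
`W_v(i) ≤ (β + 1)·W_v(i + 1)`, where `W_v(j)` is the weight of `v` computed with the level of `v`
replaced by `j` and all other vertex levels unchanged. -/
theorem weight_consecutive_levels {V : Type*} [Fintype V] (G : SimpleGraph V)
    (c : V → ℝ) (k : V → ℕ) (β μ : ℝ) (ℓ : V → ℕ)
    (hc : ∀ v, 0 < c v) (hk : ∀ v, 1 ≤ k v) (hβ : 1 < β) (hμ : ∀ v, c v < μ) :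
    ∀ (v : V) (i : ℕ),
      vertexWeight G β μ k (Function.update ℓ v i) v
        ≤ (β + 1) * vertexWeight G β μ k (Function.update ℓ v (i + 1)) v :=
  weight_consecutive_levels_general G c k β μ ℓ hc hβ hμ
end

section
/- Given a valid level scheme on G with a consistent edge assignment δ, define for each vertex v: if |δ(v)| > k_v, set q_v = μ·β^(−ℓ(v)) and l_{ev} = 0 for all edges e ∋ v; otherwise set q_v = μ·Σ_{i : D̂_v(i) > k_v} β^(−i), and for each edge e ∋ v set l_{ev} = 0 if D̂_v(ℓ(e)) > k_v and l_{ev} = μ·β^(−ℓ(e)) otherwise. Also set π_e = μ·β^(−ℓ(e)) for each edge e. Then (q, l, π) is a feasible dual solution: q_v ≥ 0, l_{ev} ≥ 0, π_e ≥ 0, k_v·q_v + Σ_{e ∋ v} l_{ev} ≤ c_v for every vertex v, and q_v + l_{ev} ≥ π_e for every incidence v ∈ e ∈ E. -/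
open scoped Classical

/-- `D̂_v(i)`: the number of edges incident to `v` whose edge level equals `i`. -/
noncomputable def incEdgeCount {V : Type*} [Fintype V] (G : SimpleGraph V)
    (ℓ : V → ℕ) (v : V) (i : ℕ) : ℕ :=
  (Finset.univ.filter fun u => G.Adj v u ∧ max (ℓ u) (ℓ v) = i).card

/-- `|δ(v)|`: the number of edges assigned to `v` by the edge assignment `A`,
where `A u v` means that the edge `{u, v}` is assigned to its endpoint `v`. -/
noncomputable def assignedCount {V : Type*} [Fintype V] (G : SimpleGraph V)
    (A : V → V → Prop) (v : V) : ℕ :=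
  (Finset.univ.filter fun u => G.Adj v u ∧ A u v).card

/-- The dual variable `q_v` constructed from a valid level scheme with edge assignment `A`. -/
noncomputable def qdef {V : Type*} [Fintype V] (G : SimpleGraph V)
    (β μ : ℝ) (k : V → ℕ) (ℓ : V → ℕ) (A : V → V → Prop) (v : V) : ℝ :=
  if k v < assignedCount G A v then μ * β ^ (-(ℓ v : ℤ))
  else μ * ∑' i : ℕ, if k v < incEdgeCount G ℓ v i then β ^ (-(i : ℤ)) else 0

/-- The dual variable `l_{ev}` for the edge `e = {u, v}` at its endpoint `v`, constructed from a
valid level scheme with edge assignment `A`. -/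
noncomputable def ldef {V : Type*} [Fintype V] (G : SimpleGraph V)
    (β μ : ℝ) (k : V → ℕ) (ℓ : V → ℕ) (A : V → V → Prop) (u v : V) : ℝ :=
  if k v < assignedCount G A v then 0
  else if k v < incEdgeCount G ℓ v (max (ℓ u) (ℓ v)) then 0
  else μ * β ^ (-(max (ℓ u) (ℓ v) : ℤ))

/-!
If `v` is not overloaded (`|δ(v)| ≤ k_v`), then for every level `i` the edges of level `i` at `v`
contribute `k_v·μ·β^(−i)` through `q_v` when `D̂_v(i) > k_v` and `D̂_v(i)·μ·β^(−i)` through the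
`l_{ev}` otherwise, i.e. `min{k_v, D̂_v(i)}·μ·β^(−i)` in both cases; summed over `i` this is
exactly `W_v`, so the budget constraint is validity. If `v` is overloaded, all edges of `δ(v)`
have level `ℓ(v)`, so `D̂_v(ℓ(v)) > k_v` and already the first summand of `W_v` equals
`k_v·q_v`. Covering is immediate: either `l_{ev} = π_e`, or `q_v` contains the summand
`μ·β^(−ℓ(e)) = π_e`.
-/

section

open Finset

variable {V : Type*} [Fintype V] (G : SimpleGraph V) (ℓ : V → ℕ)

lemma incEdgeCount_eq_zero_of_notMem {v : V} {i : ℕ}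
    (hi : i ∉ Icc (ℓ v) (univ.sup ℓ)) : incEdgeCount G ℓ v i = 0 := by
  rw [incEdgeCount, card_eq_zero, filter_eq_empty_iff]
  rintro u - ⟨-, rfl⟩
  exact hi (mem_Icc.2 ⟨le_max_right _ _, max_le (le_sup (mem_univ u)) (le_sup (mem_univ v))⟩)

lemma incEdgeCount_self (v : V) :
    incEdgeCount G ℓ v (ℓ v) = levelCountRange G ℓ v 0 (ℓ v) := by
  unfold incEdgeCount levelCountRange
  congr 1
  refine filter_congr fun u _ => ?_
  simp only [max_eq_right_iff, zero_le, true_and]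

lemma incEdgeCount_of_lt {v : V} {i : ℕ} (h : ℓ v < i) :
    incEdgeCount G ℓ v i = levelCount G ℓ v i := by
  unfold incEdgeCount levelCount
  congr 1
  refine filter_congr fun u _ => and_congr_right fun _ => ?_
  rw [max_def]
  split_ifs <;> omega

lemma tsum_incEdgeCount (v : V) (f : ℕ → ℕ → ℝ) (hf : ∀ i, f 0 i = 0) :
    ∑' i, f (incEdgeCount G ℓ v i) i
      = ∑ i ∈ Icc (ℓ v) (univ.sup ℓ), f (incEdgeCount G ℓ v i) i :=
  tsum_eq_sum fun i hi => by rw [incEdgeCount_eq_zero_of_notMem G ℓ hi, hf]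

lemma assignedCount_le_incEdgeCount_self {A : V → V → Prop} {v : V}
    (hAlevel : ∀ u, G.Adj u v → A u v → ℓ v = max (ℓ u) (ℓ v)) :
    assignedCount G A v ≤ incEdgeCount G ℓ v (ℓ v) :=
  card_le_card <| monotone_filter_right _ fun u _ hu => ⟨hu.1, (hAlevel u hu.1.symm hu.2).symm⟩

variable {β μ : ℝ} {k : V → ℕ} {A : V → V → Prop}

lemma vertexWeight_eq_sum (v : V) :
    vertexWeight G β μ k ℓ v = ∑ i ∈ Icc (ℓ v) (univ.sup ℓ),
      (min (k v) (incEdgeCount G ℓ v i) : ℝ) * μ * β ^ (-(i : ℤ)) := by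
  have htail : (∑' i : ℕ, if ℓ v < i then
        (min (k v) (levelCount G ℓ v i) : ℝ) * μ * β ^ (-(i : ℤ)) else 0)
      = ∑ i ∈ Icc (ℓ v) (univ.sup ℓ), if ℓ v < i then
        (min (k v) (incEdgeCount G ℓ v i) : ℝ) * μ * β ^ (-(i : ℤ)) else 0 := by
    rw [← tsum_incEdgeCount G ℓ v
      (fun n i => if ℓ v < i then (min (k v) n : ℝ) * μ * β ^ (-(i : ℤ)) else 0) (by simp)]
    refine tsum_congr fun i => ?_
    split_ifs with h
    · rw [incEdgeCount_of_lt G ℓ h]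
    · rfl
  have hmem : ℓ v ∈ Icc (ℓ v) (univ.sup ℓ) := mem_Icc.2 ⟨le_rfl, le_sup (mem_univ v)⟩
  rw [vertexWeight, htail, ← incEdgeCount_self, sum_ite, sum_const_zero, add_zero,
    ← add_sum_erase _ _ hmem]
  congr 1
  refine sum_congr ?_ fun _ _ => rfl
  ext i
  simp only [mem_filter, mem_erase, mem_Icc]
  omega

lemma qdef_of_not_lt {v : V} (h : ¬ k v < assignedCount G A v) :
    qdef G β μ k ℓ A v = μ * ∑ i ∈ Icc (ℓ v) (univ.sup ℓ),
      if k v < incEdgeCount G ℓ v i then β ^ (-(i : ℤ)) else 0 := by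
  rw [qdef, if_neg h,
    tsum_incEdgeCount G ℓ v (fun n i => if k v < n then β ^ (-(i : ℤ)) else 0) (by simp)]

lemma sum_ldef_of_not_lt {v : V} (h : ¬ k v < assignedCount G A v) :
    ∑ u ∈ univ.filter (fun u => G.Adj v u), ldef G β μ k ℓ A u v
      = ∑ i ∈ Icc (ℓ v) (univ.sup ℓ),
        if k v < incEdgeCount G ℓ v i then 0
        else (incEdgeCount G ℓ v i : ℝ) * μ * β ^ (-(i : ℤ)) := by
  have hmaps : ∀ u ∈ univ.filter (fun u => G.Adj v u),
      max (ℓ u) (ℓ v) ∈ Icc (ℓ v) (univ.sup ℓ) := fun u _ =>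
    mem_Icc.2 ⟨le_max_right _ _, max_le (le_sup (mem_univ u)) (le_sup (mem_univ v))⟩
  rw [← sum_fiberwise_of_maps_to hmaps]
  refine sum_congr rfl fun i _ => ?_
  have hfiber : ∀ u ∈ (univ.filter fun u => G.Adj v u).filter (fun u => max (ℓ u) (ℓ v) = i),
      ldef G β μ k ℓ A u v = if k v < incEdgeCount G ℓ v i then 0 else μ * β ^ (-(i : ℤ)) := by
    intro u hu
    rw [mem_filter] at hu
    rw [ldef, if_neg h, ← Nat.cast_max, hu.2]
  rw [sum_congr rfl hfiber, sum_const, filter_filter]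
  split_ifs <;> simp [incEdgeCount, nsmul_eq_mul, mul_assoc]

lemma mul_qdef_add_sum_ldef_eq_vertexWeight {v : V} (h : ¬ k v < assignedCount G A v) :
    (k v : ℝ) * qdef G β μ k ℓ A v
        + ∑ u ∈ univ.filter (fun u => G.Adj v u), ldef G β μ k ℓ A u v
      = vertexWeight G β μ k ℓ v := by
  rw [qdef_of_not_lt G ℓ h, sum_ldef_of_not_lt G ℓ h, vertexWeight_eq_sum, ← mul_assoc, mul_sum,
    ← sum_add_distrib]
  refine sum_congr rfl fun i _ => ?_
  split_ifs with hi
  · rw [min_eq_left (by exact_mod_cast hi.le)]; ring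
  · rw [min_eq_right (by exact_mod_cast not_lt.1 hi)]; ring

lemma mul_qdef_add_sum_ldef_le_vertexWeight_of_lt {v : V} (hμ : 0 ≤ μ) (hβ : 0 ≤ β)
    (hAlevel : ∀ u, G.Adj u v → A u v → ℓ v = max (ℓ u) (ℓ v)) (h : k v < assignedCount G A v) :
    (k v : ℝ) * qdef G β μ k ℓ A v
        + ∑ u ∈ univ.filter (fun u => G.Adj v u), ldef G β μ k ℓ A u v
      ≤ vertexWeight G β μ k ℓ v := by
  have hsat : k v < incEdgeCount G ℓ v (ℓ v) :=
    h.trans_le (assignedCount_le_incEdgeCount_self G ℓ hAlevel)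
  rw [qdef, if_pos h, sum_eq_zero fun u _ => by rw [ldef, if_pos h], add_zero,
    vertexWeight_eq_sum]
  calc (k v : ℝ) * (μ * β ^ (-(ℓ v : ℤ)))
      = (min (k v) (incEdgeCount G ℓ v (ℓ v)) : ℝ) * μ * β ^ (-(ℓ v : ℤ)) := by
        rw [min_eq_left (by exact_mod_cast hsat.le)]; ring
    _ ≤ _ := single_le_sum
        (f := fun i => (min (k v) (incEdgeCount G ℓ v i) : ℝ) * μ * β ^ (-(i : ℤ)))
        (fun i _ => by positivity) (mem_Icc.2 ⟨le_rfl, le_sup (mem_univ v)⟩)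

lemma mul_qdef_add_sum_ldef_le_vertexWeight {v : V} (hμ : 0 ≤ μ) (hβ : 0 ≤ β)
    (hAlevel : ∀ u, G.Adj u v → A u v → ℓ v = max (ℓ u) (ℓ v)) :
    (k v : ℝ) * qdef G β μ k ℓ A v
        + ∑ u ∈ univ.filter (fun u => G.Adj v u), ldef G β μ k ℓ A u v
      ≤ vertexWeight G β μ k ℓ v := by
  by_cases h : k v < assignedCount G A v
  · exact mul_qdef_add_sum_ldef_le_vertexWeight_of_lt G ℓ hμ hβ hAlevel h
  · exact (mul_qdef_add_sum_ldef_eq_vertexWeight G ℓ h).le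

lemma qdef_nonneg (hμ : 0 ≤ μ) (hβ : 0 ≤ β) (v : V) : 0 ≤ qdef G β μ k ℓ A v := by
  unfold qdef
  split_ifs
  · positivity
  · exact mul_nonneg hμ (tsum_nonneg fun i => by split_ifs <;> positivity)

lemma ldef_nonneg (hμ : 0 ≤ μ) (hβ : 0 ≤ β) (u v : V) : 0 ≤ ldef G β μ k ℓ A u v := by
  unfold ldef
  split_ifs <;> positivity

lemma le_qdef_add_ldef (hμ : 0 ≤ μ) (hβ : 1 ≤ β) (u v : V) :
    μ * β ^ (-(max (ℓ u) (ℓ v) : ℤ)) ≤ qdef G β μ k ℓ A v + ldef G β μ k ℓ A u v := by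
  by_cases h : k v < assignedCount G A v
  · rw [qdef, ldef, if_pos h, if_pos h, add_zero]
    gcongr
    exact le_max_right _ _
  by_cases hsat : k v < incEdgeCount G ℓ v (max (ℓ u) (ℓ v))
  · have hmem : max (ℓ u) (ℓ v) ∈ Icc (ℓ v) (univ.sup ℓ) := by
      by_contra hn
      rw [incEdgeCount_eq_zero_of_notMem G ℓ hn] at hsat
      exact Nat.not_lt_zero _ hsat
    rw [ldef, if_neg h, if_pos hsat, add_zero, qdef_of_not_lt G ℓ h, ← Nat.cast_max]
    gcongr
    exact (if_pos hsat).symm.le.trans <|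
      single_le_sum (f := fun i => if k v < incEdgeCount G ℓ v i then β ^ (-(i : ℤ)) else 0)
        (fun i _ => by positivity) hmem
  · rw [ldef, if_neg h, if_neg hsat]
    exact le_add_of_nonneg_left (qdef_nonneg G ℓ hμ (zero_le_one.trans hβ) v)

end

theorem dual_feasibility_general {V : Type*} [Fintype V] (G : SimpleGraph V)
    (c : V → ℝ) (k : V → ℕ) (β μ : ℝ) (ℓ : V → ℕ) (A : V → V → Prop)
    (hc : ∀ v, 0 < c v) (hβ : 1 < β) (hμ : ∀ v, c v < μ)
    -- the scheme is valid
    (hvalid : ∀ v, vertexWeight G β μ k ℓ v ≤ c v)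
    -- ... whose level equals the edge level
    (hAlevel : ∀ u v, G.Adj u v → A u v → ℓ v = max (ℓ u) (ℓ v)) :
    (∀ v, 0 ≤ qdef G β μ k ℓ A v) ∧
    (∀ u v, G.Adj u v → 0 ≤ ldef G β μ k ℓ A u v) ∧
    (∀ u v, G.Adj u v → 0 ≤ μ * β ^ (-(max (ℓ u) (ℓ v) : ℤ))) ∧
    (∀ v, (k v : ℝ) * qdef G β μ k ℓ A v
        + ∑ u ∈ Finset.univ.filter (fun u => G.Adj v u), ldef G β μ k ℓ A u v ≤ c v) ∧
    (∀ u v, G.Adj u v →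
        μ * β ^ (-(max (ℓ u) (ℓ v) : ℤ)) ≤ qdef G β μ k ℓ A v + ldef G β μ k ℓ A u v) := by
  have hμ₀ : ∀ v, 0 ≤ μ := fun v => ((hc v).trans (hμ v)).le
  have hβ₀ : 0 ≤ β := zero_le_one.trans hβ.le
  refine ⟨fun v => qdef_nonneg G ℓ (hμ₀ v) hβ₀ v,
    fun u v _ => ldef_nonneg G ℓ (hμ₀ v) hβ₀ u v,
    fun u v _ => mul_nonneg (hμ₀ v) (zpow_nonneg hβ₀ _),
    fun v => (mul_qdef_add_sum_ldef_le_vertexWeight G ℓ (hμ₀ v) hβ₀ fun u => hAlevel u v).trans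
      (hvalid v),
    fun u v _ => le_qdef_add_ldef G ℓ (hμ₀ v) hβ.le u v⟩

/-- Given a valid level scheme with a consistent edge assignment, the prescribed
`(q, l, π)` (with `π_e = μ·β^(−ℓ(e))`) is a feasible dual solution. -/
theorem dual_feasibility {V : Type*} [Fintype V] (G : SimpleGraph V)
    (c : V → ℝ) (k : V → ℕ) (β μ : ℝ) (ℓ : V → ℕ) (A : V → V → Prop)
    (hc : ∀ v, 0 < c v) (hk : ∀ v, 1 ≤ k v) (hβ : 1 < β) (hμ : ∀ v, c v < μ)
    -- the scheme is valid
    (hvalid : ∀ v, vertexWeight G β μ k ℓ v ≤ c v)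
    -- `A` assigns each edge to exactly one of its endpoints ...
    (hA : ∀ u v, G.Adj u v → (A u v ∧ ¬ A v u) ∨ (A v u ∧ ¬ A u v))
    -- ... whose level equals the edge level
    (hAlevel : ∀ u v, G.Adj u v → A u v → ℓ v = max (ℓ u) (ℓ v)) :
    (∀ v, 0 ≤ qdef G β μ k ℓ A v) ∧
    (∀ u v, G.Adj u v → 0 ≤ ldef G β μ k ℓ A u v) ∧
    (∀ u v, G.Adj u v → 0 ≤ μ * β ^ (-(max (ℓ u) (ℓ v) : ℤ))) ∧
    (∀ v, (k v : ℝ) * qdef G β μ k ℓ A v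
        + ∑ u ∈ Finset.univ.filter (fun u => G.Adj v u), ldef G β μ k ℓ A u v ≤ c v) ∧
    (∀ u v, G.Adj u v →
        μ * β ^ (-(max (ℓ u) (ℓ v) : ℤ)) ≤ qdef G β μ k ℓ A v + ldef G β μ k ℓ A u v) :=
  dual_feasibility_general G c k β μ ℓ A hc hβ hμ hvalid hAlevel
end

section
/- Let ε ≥ 1 and let an ε-tight valid level scheme on G with consistent edge assignment δ be given. Then Σ_{v : δ(v) ≠ ∅} ⌈|δ(v)|/k_v⌉·c_v ≤ ε·(2β/(β − 1) + 1)·Σ_{e ∈ E} μ·β^(−ℓ(e)). -/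
open scoped Classical

/-- The level of an edge: the maximum of the levels of its endpoints. -/
noncomputable def edgeLevel {V : Type*} (ℓ : V → ℕ) : Sym2 V → ℕ :=
  Sym2.lift ⟨fun a b => max (ℓ a) (ℓ b), fun a b => max_comm _ _⟩

/-!
Each vertex `v` with `δ(v) ≠ ∅` is charged to the edges around it. Tightness gives
`c_v < ε W_v`, and `⌈n/k⌉ < n/k + 1` gives `⌈n/k⌉ · min(k, m) ≤ n + m`; grouping the neighbours
of `v` by the level of the joining edge, `⌈|δ(v)|/k_v⌉ W_v` is at most
`|δ(v)| Σ_{i ≥ ℓ(v)} μβ^(-i) + Σ_{u ~ v} μβ^(-ℓ(uv))`. The geometric sum is at most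
`μβ^(-ℓ(v)) β/(β-1)`, and `|δ(v)| μβ^(-ℓ(v))` is the total weight of the edges assigned to `v`.
Summing over `v`, the assigned edges count every edge once and the neighbourhoods count it twice,
which gives `ε (β/(β-1) + 2) Σ_e μβ^(-ℓ(e))`, and `β/(β-1) + 2 ≤ 2β/(β-1) + 1` as `β/(β-1) ≥ 1`.
-/

open Finset

namespace SimpleGraph

variable {V : Type*} [Fintype V] (G : SimpleGraph V) {M : Type*} [AddCommMonoid M]

theorem sum_sum_adj_eq_sum_dart (F : V → V → M) :
    ∑ v, ∑ u ∈ univ.filter (fun u => G.Adj v u), F v u = ∑ d : G.Dart, F d.fst d.snd := by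
  rw [sum_sigma']
  refine sum_bij' (fun x hx => ⟨(x.1, x.2), by simpa using hx⟩) (fun d _ => ⟨d.fst, d.snd⟩)
    ?_ ?_ ?_ ?_ ?_ <;> simp

theorem sum_dart_edge (f : Sym2 V → M) :
    ∑ d : G.Dart, f d.edge = 2 • ∑ e ∈ G.edgeFinset, f e := by
  rw [← sum_fiberwise_of_maps_to (g := Dart.edge) (t := G.edgeFinset)
    (fun d _ => mem_edgeFinset.2 d.edge_mem), smul_sum]
  refine sum_congr rfl fun e he => ?_
  rw [sum_congr rfl fun d hd => by rw [(mem_filter.1 hd).2], sum_const]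
  congr 1
  convert G.dart_edge_fiber_card e (mem_edgeFinset.1 he)

variable {G} in
theorem sum_dart_edge_of_orientation {A : V → V → Prop}
    (hA : ∀ u v, G.Adj u v → (A u v ∧ ¬ A v u) ∨ (A v u ∧ ¬ A u v)) (f : Sym2 V → M) :
    ∑ d ∈ univ.filter (fun d : G.Dart => A d.snd d.fst), f d.edge = ∑ e ∈ G.edgeFinset, f e := by
  refine sum_bij (fun d _ => d.edge) (fun d _ => mem_edgeFinset.2 d.edge_mem) ?_ ?_
    (fun _ _ => rfl)
  · intro d₁ h₁ d₂ h₂ h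
    simp only [mem_filter, mem_univ, true_and] at h₁ h₂
    rcases (dart_edge_eq_iff d₁ d₂).1 h with h | rfl
    · exact h
    · rcases hA _ _ d₂.adj with h | h
      · exact absurd h₂ h.2
      · exact absurd h₁ h.2
  · intro e he
    induction e using Sym2.ind with
    | _ x y =>
      have hxy : G.Adj x y := mem_edgeFinset.1 he
      rcases hA x y hxy with h | h
      · exact ⟨⟨(y, x), hxy.symm⟩, by simpa using h.1, Sym2.eq_swap⟩
      · exact ⟨⟨(x, y), hxy⟩, by simpa using h.1, rfl⟩

theorem sum_sum_adj_edge_eq_two_nsmul (f : Sym2 V → M) :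
    ∑ v, ∑ u ∈ univ.filter (fun u => G.Adj v u), f s(v, u) = 2 • ∑ e ∈ G.edgeFinset, f e := by
  rw [sum_sum_adj_eq_sum_dart]
  exact sum_dart_edge G f

variable {G} in
theorem sum_sum_adj_edge_of_orientation {A : V → V → Prop}
    (hA : ∀ u v, G.Adj u v → (A u v ∧ ¬ A v u) ∨ (A v u ∧ ¬ A u v)) (f : Sym2 V → M) :
    ∑ v, ∑ u ∈ univ.filter (fun u => G.Adj v u ∧ A u v), f s(v, u) = ∑ e ∈ G.edgeFinset, f e := by
  have h v : ∑ u ∈ univ.filter (fun u => G.Adj v u ∧ A u v), f s(v, u)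
      = ∑ u ∈ univ.filter (fun u => G.Adj v u), if A u v then f s(v, u) else 0 := by
    rw [← filter_filter, sum_filter]
  rw [Fintype.sum_congr _ _ h, sum_sum_adj_eq_sum_dart, ← sum_filter]
  exact sum_dart_edge_of_orientation hA f

end SimpleGraph

theorem ceil_div_mul_min_le {n k : ℕ} (hk : 0 < k) (m : ℕ) :
    (⌈(n : ℝ) / k⌉₊ : ℝ) * min (k : ℝ) m ≤ n + m := by
  have hk' : (0 : ℝ) < k := by exact_mod_cast hk
  have hmin : (0 : ℝ) ≤ min (k : ℝ) m := by positivity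
  calc (⌈(n : ℝ) / k⌉₊ : ℝ) * min (k : ℝ) m
      ≤ ((n : ℝ) / k + 1) * min (k : ℝ) m := by
        gcongr; exact (Nat.ceil_lt_add_one (by positivity)).le
    _ ≤ (n : ℝ) / k * k + m := by
        rw [add_mul, one_mul]; gcongr
        · exact min_le_left _ _
        · exact min_le_right _ _
    _ = n + m := by rw [div_mul_cancel₀ _ hk'.ne']

theorem ceil_div_mul_sum_min_card_le {α : Type*} (N : Finset α) (lvl : α → ℕ) {I : Finset ℕ}
    (hI : ∀ u ∈ N, lvl u ∈ I) {g : ℕ → ℝ} (hg : ∀ i ∈ I, 0 ≤ g i) {n k : ℕ} (hk : 0 < k) :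
    (⌈(n : ℝ) / k⌉₊ : ℝ) * ∑ i ∈ I, min (k : ℝ) #(N.filter fun u => lvl u = i) * g i
      ≤ n * ∑ i ∈ I, g i + ∑ u ∈ N, g (lvl u) := by
  rw [mul_sum, mul_sum, ← sum_fiberwise_of_maps_to hI, ← sum_add_distrib]
  gcongr with i hi
  rw [sum_congr rfl fun u hu => by rw [(mem_filter.1 hu).2], sum_const, nsmul_eq_mul]
  calc (⌈(n : ℝ) / k⌉₊ : ℝ) * (min (k : ℝ) #(N.filter fun u => lvl u = i) * g i)
      = (⌈(n : ℝ) / k⌉₊ : ℝ) * min (k : ℝ) #(N.filter fun u => lvl u = i) * g i := by ring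
    _ ≤ (n + #(N.filter fun u => lvl u = i)) * g i :=
        mul_le_mul_of_nonneg_right (ceil_div_mul_min_le hk _) (hg i hi)
    _ = n * g i + #(N.filter fun u => lvl u = i) * g i := by ring

theorem sum_Ico_zpow_neg_le {β : ℝ} (hβ : 1 < β) (L M : ℕ) :
    ∑ i ∈ Ico L M, β ^ (-(i : ℤ)) ≤ β ^ (-(L : ℤ)) * (β / (β - 1)) := by
  have hβ0 : 0 < β := by linarith
  simp only [zpow_neg, zpow_natCast, ← inv_pow]
  calc ∑ i ∈ Ico L M, β⁻¹ ^ i ≤ β⁻¹ ^ L / (1 - β⁻¹) :=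
        geom_sum_Ico_le_of_lt_one (by positivity) (inv_lt_one_of_one_lt₀ hβ)
    _ = β⁻¹ ^ L * (β / (β - 1)) := by
        have : β - 1 ≠ 0 := by linarith
        field_simp

section Weight

variable {V : Type*} [Fintype V] (G : SimpleGraph V) (β μ : ℝ) (k ℓ : V → ℕ) (v : V)

theorem vertexWeight_eq_sum_Ico {M : ℕ} (hM : ∀ u, ℓ u < M) :
    vertexWeight G β μ k ℓ v = ∑ i ∈ Ico (ℓ v) M,
      min (k v : ℝ) #((univ.filter fun u => G.Adj v u).filter fun u => edgeLevel ℓ s(v, u) = i)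
        * (μ * β ^ (-(i : ℤ))) := by
  have hlevel u : edgeLevel ℓ s(v, u) = max (ℓ v) (ℓ u) := rfl
  rw [vertexWeight, sum_eq_sum_Ico_succ_bot (hM v), mul_assoc, filter_filter, levelCountRange,
    filter_congr (q := fun u => G.Adj v u ∧ edgeLevel ℓ s(v, u) = ℓ v)
      fun u _ => and_congr_right fun _ => by rw [hlevel]; omega]
  congr 1
  rw [tsum_eq_sum (s := Ico (ℓ v + 1) M)]
  · refine sum_congr rfl fun i hi => ?_
    have hvi : ℓ v < i := by rw [mem_Ico] at hi; omega
    rw [if_pos hvi, mul_assoc, levelCount, filter_filter,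
      filter_congr (q := fun u => G.Adj v u ∧ edgeLevel ℓ s(v, u) = i)
        fun u _ => and_congr_right fun _ => by rw [hlevel]; omega]
  · intro i hi
    rw [mem_Ico] at hi
    split_ifs with hvi
    · have hempty : levelCount G ℓ v i = 0 :=
        card_eq_zero.2 (filter_eq_empty_iff.2 fun u _ hu => by have := hM u; omega)
      simp [hempty]
    · rfl

theorem ceil_div_mul_vertexWeight_le (hβ : 1 < β) (hμ : 0 ≤ μ) (hk : 0 < k v) (n : ℕ) :
    (⌈(n : ℝ) / k v⌉₊ : ℝ) * vertexWeight G β μ k ℓ v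
      ≤ n * (μ * β ^ (-(ℓ v : ℤ))) * (β / (β - 1))
        + ∑ u ∈ univ.filter (fun u => G.Adj v u), μ * β ^ (-(edgeLevel ℓ s(v, u) : ℤ)) := by
  have hβ0 : 0 < β := by linarith
  have hM u : ℓ u < univ.sup ℓ + 1 := Nat.lt_succ_of_le (le_sup (mem_univ u))
  rw [vertexWeight_eq_sum_Ico G β μ k ℓ v hM]
  refine (ceil_div_mul_sum_min_card_le _ (fun u => edgeLevel ℓ s(v, u)) ?_
    (fun i _ => by positivity) hk).trans ?_
  · intro u _
    simp only [mem_Ico, edgeLevel, Sym2.lift_mk]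
    exact ⟨le_max_left _ _, max_lt (hM v) (hM u)⟩
  rw [← mul_sum, mul_assoc, mul_assoc]
  gcongr
  exact sum_Ico_zpow_neg_le hβ _ _

variable {G ℓ v} in
theorem assignedCount_nsmul_eq_sum {M : Type*} [AddCommMonoid M] {A : V → V → Prop}
    (hAlevel : ∀ u v, G.Adj u v → A u v → ℓ v = max (ℓ u) (ℓ v)) (g : ℕ → M) :
    assignedCount G A v • g (ℓ v)
      = ∑ u ∈ univ.filter (fun u => G.Adj v u ∧ A u v), g (edgeLevel ℓ s(v, u)) := by
  rw [assignedCount, ← sum_const]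
  refine sum_congr rfl fun u hu => ?_
  obtain ⟨hadj, huv⟩ : G.Adj v u ∧ A u v := by simpa using hu
  simp only [edgeLevel, Sym2.lift_mk]
  rw [max_comm, ← hAlevel u v hadj.symm huv]

variable {G β μ k ℓ v} in
theorem ceil_div_assignedCount_mul_vertexWeight_le {A : V → V → Prop} (hβ : 1 < β) (hμ : 0 ≤ μ)
    (hk : 0 < k v) (hAlevel : ∀ u v, G.Adj u v → A u v → ℓ v = max (ℓ u) (ℓ v)) :
    (⌈(assignedCount G A v : ℝ) / k v⌉₊ : ℝ) * vertexWeight G β μ k ℓ v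
      ≤ (∑ u ∈ univ.filter (fun u => G.Adj v u ∧ A u v), μ * β ^ (-(edgeLevel ℓ s(v, u) : ℤ)))
          * (β / (β - 1))
        + ∑ u ∈ univ.filter (fun u => G.Adj v u), μ * β ^ (-(edgeLevel ℓ s(v, u) : ℤ)) := by
  rw [← assignedCount_nsmul_eq_sum hAlevel fun i : ℕ => μ * β ^ (-(i : ℤ)), nsmul_eq_mul]
  exact ceil_div_mul_vertexWeight_le G β μ k ℓ v hβ hμ hk _

end Weight

theorem tight_scheme_cost_bound_general {V : Type*} [Fintype V] (G : SimpleGraph V)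
    (c : V → ℝ) (k : V → ℕ) (β μ ε : ℝ) (ℓ : V → ℕ) (A : V → V → Prop)
    (hc : ∀ v, 0 < c v) (hk : ∀ v, 1 ≤ k v) (hβ : 1 < β) (hμ : ∀ v, c v < μ) (hε : 1 ≤ ε)
    -- `A` assigns each edge to exactly one of its endpoints ...
    (hA : ∀ u v, G.Adj u v → (A u v ∧ ¬ A v u) ∨ (A v u ∧ ¬ A u v))
    -- ... whose level equals the edge level
    (hAlevel : ∀ u v, G.Adj u v → A u v → ℓ v = max (ℓ u) (ℓ v))
    -- and `ε`-tight
    (htight : ∀ v, 0 < assignedCount G A v → c v / ε < vertexWeight G β μ k ℓ v) :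
    ∑ v ∈ Finset.univ.filter (fun v => 0 < assignedCount G A v),
        (⌈(assignedCount G A v : ℝ) / (k v : ℝ)⌉₊ : ℝ) * c v
      ≤ ε * (2 * β / (β - 1) + 1) * ∑ e ∈ G.edgeFinset, μ * β ^ (-(edgeLevel ℓ e : ℤ)) := by
  set f : Sym2 V → ℝ := fun e => μ * β ^ (-(edgeLevel ℓ e : ℤ))
  set b : V → ℝ := fun v => (∑ u ∈ univ.filter (fun u => G.Adj v u ∧ A u v), f s(v, u))
    * (β / (β - 1)) + ∑ u ∈ univ.filter (fun u => G.Adj v u), f s(v, u)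
  have hε0 : 0 < ε := by linarith
  have hβ' : 1 ≤ β / (β - 1) := by rw [le_div_iff₀ (by linarith)]; linarith
  have hμ0 (v : V) : 0 ≤ μ := ((hc v).trans (hμ v)).le
  have hf e : 0 ≤ f e := by have := hμ0 e.out.1; positivity
  have hb v : 0 ≤ b v :=
    add_nonneg (mul_nonneg (sum_nonneg fun _ _ => hf _) (by linarith)) (sum_nonneg fun _ _ => hf _)
  have hcost v (hv : 0 < assignedCount G A v) :
      (⌈(assignedCount G A v : ℝ) / k v⌉₊ : ℝ) * c v ≤ ε * b v :=
    calc _ ≤ (⌈(assignedCount G A v : ℝ) / k v⌉₊ : ℝ) * (ε * vertexWeight G β μ k ℓ v) := by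
          gcongr; exact ((div_lt_iff₀' hε0).1 (htight v hv)).le
      _ = ε * ((⌈(assignedCount G A v : ℝ) / k v⌉₊ : ℝ) * vertexWeight G β μ k ℓ v) :=
          mul_left_comm _ _ _
      _ ≤ ε * b v := by
          gcongr; exact ceil_div_assignedCount_mul_vertexWeight_le hβ (hμ0 v) (hk v) hAlevel
  have hsum : ∑ v, b v = (β / (β - 1) + 2) * ∑ e ∈ G.edgeFinset, f e := by
    simp only [b, sum_add_distrib, ← sum_mul, SimpleGraph.sum_sum_adj_edge_of_orientation hA,
      SimpleGraph.sum_sum_adj_edge_eq_two_nsmul]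
    ring
  calc _ ≤ ∑ v ∈ univ.filter (fun v => 0 < assignedCount G A v), ε * b v :=
        sum_le_sum fun v hv => hcost v (mem_filter.1 hv).2
    _ ≤ ∑ v, ε * b v :=
        sum_le_sum_of_subset_of_nonneg (filter_subset _ _) fun v _ _ => mul_nonneg hε0.le (hb v)
    _ = ε * ((β / (β - 1) + 2) * ∑ e ∈ G.edgeFinset, f e) := by rw [← mul_sum, hsum]
    _ ≤ ε * ((2 * β / (β - 1) + 1) * ∑ e ∈ G.edgeFinset, f e) := by
        have := sum_nonneg fun e (_ : e ∈ G.edgeFinset) => hf e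
        gcongr ε * (?_ * _)
        rw [mul_div_assoc]; linarith
    _ = _ := by ring

/-- Given an `ε`-tight valid level scheme with consistent edge assignment `δ`,
`Σ_{v : δ(v) ≠ ∅} ⌈|δ(v)|/k_v⌉·c_v ≤ ε·(2β/(β − 1) + 1)·Σ_{e ∈ E} μ·β^(−ℓ(e))`. -/
theorem tight_scheme_cost_bound {V : Type*} [Fintype V] (G : SimpleGraph V)
    (c : V → ℝ) (k : V → ℕ) (β μ ε : ℝ) (ℓ : V → ℕ) (A : V → V → Prop)
    (hc : ∀ v, 0 < c v) (hk : ∀ v, 1 ≤ k v) (hβ : 1 < β) (hμ : ∀ v, c v < μ) (hε : 1 ≤ ε)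
    -- `A` assigns each edge to exactly one of its endpoints ...
    (hA : ∀ u v, G.Adj u v → (A u v ∧ ¬ A v u) ∨ (A v u ∧ ¬ A u v))
    -- ... whose level equals the edge level
    (hAlevel : ∀ u v, G.Adj u v → A u v → ℓ v = max (ℓ u) (ℓ v))
    -- the scheme is valid
    (hvalid : ∀ v, vertexWeight G β μ k ℓ v ≤ c v)
    -- and `ε`-tight
    (htight : ∀ v, 0 < assignedCount G A v → c v / ε < vertexWeight G β μ k ℓ v) :
    ∑ v ∈ Finset.univ.filter (fun v => 0 < assignedCount G A v),
        (⌈(assignedCount G A v : ℝ) / (k v : ℝ)⌉₊ : ℝ) * c v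
      ≤ ε * (2 * β / (β - 1) + 1) * ∑ e ∈ G.edgeFinset, μ * β ^ (-(edgeLevel ℓ e : ℤ)) :=
  tight_scheme_cost_bound_general G c k β μ ε ℓ A hc hk hβ hμ hε hA hAlevel htight
end

section
/- Level-up effect on a neighbor: let u and v be adjacent vertices, let i = ℓ(v), and suppose ℓ(u) ≤ i. Let W_u′ denote the weight of u after the level of v is increased from i to i + 1, all other vertex levels unchanged. Then W_u′ ≥ W_u − μ·β^(−i); consequently (β^(ℓ(u)+1)/(μ(β − 1)))·max{0, W_u − W_u′} ≤ β/(β − 1). -/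
open scoped Classical

/-!
Moving the neighbour `v` of `u` to another level removes `v` from at most one of the counts that
make up `W_u` — the count `D_u(0, ℓ(u))` if `ℓ(v) ≤ ℓ(u)`, the count `D_u(ℓ(v))` otherwise — and
only adds it to others. Capping by `k_u` keeps each capped count from dropping by more than one,
so `W_u` drops by at most `μ·β^(−max(ℓ(u), ℓ(v)))`, which is `μ·β^(−ℓ(v))` when `ℓ(u) ≤ ℓ(v)`.
-/

open Finset Function

theorem Finset.card_filter_le_card_filter_add_one {α : Type*} {s : Finset α} {p q : α → Prop}
    [DecidablePred p] [DecidablePred q] (a : α) (h : ∀ x ≠ a, p x → q x) :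
    #(s.filter p) ≤ #(s.filter q) + 1 :=
  calc #(s.filter p) ≤ #(insert a (s.filter q)) := by
        refine card_le_card fun x hx => ?_
        rw [mem_filter] at hx
        rcases eq_or_ne x a with rfl | hxa
        · exact mem_insert_self x _
        · exact mem_insert_of_mem (mem_filter.2 ⟨hx.1, h x hxa hx.2⟩)
    _ ≤ #(s.filter q) + 1 := card_insert_le a _

theorem cast_min_mul_mul_le_add {K a b : ℕ} {μ y : ℝ} (hμ : 0 ≤ μ) (hy : 0 ≤ y)
    (hab : a ≤ b + 1) : (min K a : ℝ) * μ * y ≤ (min K b : ℝ) * μ * y + μ * y := by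
  have hmin : (min K a : ℝ) ≤ (min K b : ℝ) + 1 := by
    exact_mod_cast (by omega : min K a ≤ min K b + 1)
  nlinarith [mul_nonneg hμ hy]

section LevelCounts

variable {V : Type*} [Fintype V] (G : SimpleGraph V) (ℓ : V → ℕ) (u v : V) (n : ℕ)

theorem levelCount_le_update_add_one (j : ℕ) :
    levelCount G ℓ u j ≤ levelCount G (update ℓ v n) u j + 1 :=
  card_filter_le_card_filter_add_one v fun w hw h => by rwa [update_of_ne hw]

theorem levelCount_le_update {j : ℕ} (hj : ℓ v ≠ j) :
    levelCount G ℓ u j ≤ levelCount G (update ℓ v n) u j := by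
  refine card_le_card (monotone_filter_right _ fun w _ h => ?_)
  rcases eq_or_ne w v with rfl | hw
  · exact absurd h.2 hj
  · rwa [update_of_ne hw]

theorem levelCountRange_le_update_add_one (i j : ℕ) :
    levelCountRange G ℓ u i j ≤ levelCountRange G (update ℓ v n) u i j + 1 :=
  card_filter_le_card_filter_add_one v fun w hw h => by rwa [update_of_ne hw]

theorem levelCountRange_le_update {i j : ℕ} (hv : ¬(i ≤ ℓ v ∧ ℓ v ≤ j)) :
    levelCountRange G ℓ u i j ≤ levelCountRange G (update ℓ v n) u i j := by
  refine card_le_card (monotone_filter_right _ fun w _ h => ?_)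
  rcases eq_or_ne w v with rfl | hw
  · exact absurd h.2 hv
  · rwa [update_of_ne hw]

theorem levelCount_eq_zero_of_notMem_image {j : ℕ} (hj : j ∉ univ.image ℓ) :
    levelCount G ℓ u j = 0 := by
  rw [levelCount, card_eq_zero, filter_eq_empty_iff]
  exact fun w _ hw => hj (mem_image.2 ⟨w, mem_univ w, hw.2⟩)

noncomputable def weightTerm (β μ : ℝ) (K L j : ℕ) : ℝ :=
  if L < j then (min K (levelCount G ℓ u j) : ℝ) * μ * β ^ (-(j : ℤ)) else 0

theorem vertexWeight_eq (β μ : ℝ) (k : V → ℕ) :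
    vertexWeight G β μ k ℓ u
      = (min (k u) (levelCountRange G ℓ u 0 (ℓ u)) : ℝ) * μ * β ^ (-(ℓ u : ℤ))
      + ∑' j, weightTerm G ℓ u β μ (k u) (ℓ u) j :=
  rfl

theorem summable_weightTerm (β μ : ℝ) (K L : ℕ) : Summable (weightTerm G ℓ u β μ K L) :=
  summable_of_ne_finset_zero (s := univ.image ℓ) fun j hj => by
    simp [weightTerm, levelCount_eq_zero_of_notMem_image G ℓ u hj]

variable {β μ : ℝ} (hβ : 0 ≤ β) (hμ : 0 ≤ μ) (K L : ℕ)
include hβ hμ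

theorem weightTerm_le_update {j : ℕ} (hj : ℓ v ≠ j) :
    weightTerm G ℓ u β μ K L j ≤ weightTerm G (update ℓ v n) u β μ K L j := by
  unfold weightTerm
  split_ifs
  · gcongr
    exact levelCount_le_update G ℓ u v n hj
  · rfl

theorem weightTerm_le_update_add (j : ℕ) :
    weightTerm G ℓ u β μ K L j
      ≤ weightTerm G (update ℓ v n) u β μ K L j + μ * β ^ (-(j : ℤ)) := by
  unfold weightTerm
  split_ifs
  · exact cast_min_mul_mul_le_add hμ (zpow_nonneg hβ _)
      (levelCount_le_update_add_one G ℓ u v n j)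
  · rw [zero_add]
    exact mul_nonneg hμ (zpow_nonneg hβ _)

theorem tsum_weightTerm_le_update (hv : ℓ v ≤ L) :
    ∑' j, weightTerm G ℓ u β μ K L j
      ≤ ∑' j, weightTerm G (update ℓ v n) u β μ K L j := by
  refine (summable_weightTerm G ℓ u β μ K L).tsum_le_tsum (fun j => ?_)
    (summable_weightTerm G _ u β μ K L)
  by_cases hj : L < j
  · exact weightTerm_le_update G ℓ u v n hβ hμ K L (by omega)
  · simp [weightTerm, hj]

theorem tsum_weightTerm_le_update_add :
    ∑' j, weightTerm G ℓ u β μ K L j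
      ≤ ∑' j, weightTerm G (update ℓ v n) u β μ K L j + μ * β ^ (-(ℓ v : ℤ)) := by
  set δ : ℕ → ℝ := fun j => if j = ℓ v then μ * β ^ (-(ℓ v : ℤ)) else 0
  have hδ : Summable δ :=
    summable_of_ne_finset_zero (s := {ℓ v}) fun j hj => if_neg (by simpa using hj)
  have hs' := summable_weightTerm G (update ℓ v n) u β μ K L
  have hpoint : ∀ j,
      weightTerm G ℓ u β μ K L j ≤ weightTerm G (update ℓ v n) u β μ K L j + δ j := by
    intro j
    rcases eq_or_ne j (ℓ v) with rfl | hj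
    · simpa [δ] using weightTerm_le_update_add G ℓ u v n hβ hμ K L (ℓ v)
    · simpa [δ, hj] using weightTerm_le_update G ℓ u v n hβ hμ K L (Ne.symm hj)
  calc ∑' j, weightTerm G ℓ u β μ K L j
      ≤ ∑' j, (weightTerm G (update ℓ v n) u β μ K L j + δ j) :=
        (summable_weightTerm G ℓ u β μ K L).tsum_le_tsum hpoint (hs'.add hδ)
    _ = _ := by rw [hs'.tsum_add hδ, tsum_ite_eq]

end LevelCounts

theorem vertexWeight_le_update_add {V : Type*} [Fintype V] (G : SimpleGraph V) (β μ : ℝ)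
    (k : V → ℕ) (ℓ : V → ℕ) {u v : V} (n : ℕ) (hβ : 0 ≤ β) (hμ : 0 ≤ μ)
    (huv : u ≠ v) :
    vertexWeight G β μ k ℓ u
      ≤ vertexWeight G β μ k (update ℓ v n) u
        + μ * β ^ (-((max (ℓ u) (ℓ v) : ℕ) : ℤ)) := by
  rw [vertexWeight_eq, vertexWeight_eq, update_of_ne huv]
  rcases le_or_gt (ℓ v) (ℓ u) with hvu | hvu
  · rw [max_eq_left hvu]
    have head := cast_min_mul_mul_le_add (K := k u) hμ (zpow_nonneg hβ (-(ℓ u : ℤ)))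
      (levelCountRange_le_update_add_one G ℓ u v n 0 (ℓ u))
    have tail := tsum_weightTerm_le_update G ℓ u v n hβ hμ (k u) (ℓ u) hvu
    linarith
  · rw [max_eq_right hvu.le]
    have head : (min (k u) (levelCountRange G ℓ u 0 (ℓ u)) : ℝ) * μ * β ^ (-(ℓ u : ℤ))
        ≤ (min (k u) (levelCountRange G (update ℓ v n) u 0 (ℓ u)) : ℝ) * μ
          * β ^ (-(ℓ u : ℤ)) := by
      gcongr
      exact levelCountRange_le_update G ℓ u v n (by omega)
    have tail := tsum_weightTerm_le_update_add G ℓ u v n hβ hμ (k u) (ℓ u)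
    linarith

theorem pow_div_mul_max_zero_le {β μ x : ℝ} {a b : ℕ} (hβ : 1 < β) (hμ : 0 < μ)
    (hab : a ≤ b) (hx : x ≤ μ * β ^ (-(b : ℤ))) :
    β ^ (a + 1) / (μ * (β - 1)) * max 0 x ≤ β / (β - 1) := by
  have hβ1 : 0 < β - 1 := sub_pos.2 hβ
  have hpow : β ^ (a + 1) * β ^ (-(b : ℤ)) ≤ β := by
    rw [← zpow_natCast, ← zpow_add₀ (by positivity)]
    calc β ^ (((a + 1 : ℕ) : ℤ) + -(b : ℤ)) ≤ β ^ (1 : ℤ) :=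
          zpow_le_zpow_right₀ hβ.le (by omega)
      _ = β := zpow_one β
  calc β ^ (a + 1) / (μ * (β - 1)) * max 0 x
      ≤ β ^ (a + 1) / (μ * (β - 1)) * (μ * β ^ (-(b : ℤ))) := by
        gcongr
        exact max_le (by positivity) hx
    _ = β ^ (a + 1) * β ^ (-(b : ℤ)) / (β - 1) := by field_simp
    _ ≤ β / (β - 1) := by gcongr

theorem level_up_neighbor_effect_general {V : Type*} [Fintype V] (G : SimpleGraph V)
    (c : V → ℝ) (k : V → ℕ) (β μ : ℝ) (ℓ : V → ℕ) (u v : V)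
    (hc : ∀ w, 0 < c w) (hβ : 1 < β) (hμ : ∀ w, c w < μ)
    (hadj : G.Adj u v) (hlev : ℓ u ≤ ℓ v) :
    vertexWeight G β μ k ℓ u - μ * β ^ (-(ℓ v : ℤ))
        ≤ vertexWeight G β μ k (Function.update ℓ v (ℓ v + 1)) u ∧
    (β ^ (ℓ u + 1) / (μ * (β - 1))) *
        max 0 (vertexWeight G β μ k ℓ u
          - vertexWeight G β μ k (Function.update ℓ v (ℓ v + 1)) u)
      ≤ β / (β - 1) := by
  have hμ0 : 0 < μ := (hc u).trans (hμ u)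
  have hloss := vertexWeight_le_update_add G β μ k ℓ (ℓ v + 1) (by linarith) hμ0.le hadj.ne
  rw [max_eq_right hlev] at hloss
  exact ⟨by linarith, pow_div_mul_max_zero_le hβ hμ0 hlev (by linarith)⟩

/-- Level-up effect on a neighbor: if `u` and `v` are adjacent, `i = ℓ(v)`, `ℓ(u) ≤ i`, and `W_u′`
is the weight of `u` after the level of `v` is increased from `i` to `i + 1` (all other levels
unchanged), then `W_u′ ≥ W_u − μ·β^(−i)`, and consequently
`(β^(ℓ(u)+1)/(μ(β − 1)))·max{0, W_u − W_u′} ≤ β/(β − 1)`. -/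
theorem level_up_neighbor_effect {V : Type*} [Fintype V] (G : SimpleGraph V)
    (c : V → ℝ) (k : V → ℕ) (β μ : ℝ) (ℓ : V → ℕ) (u v : V)
    (hc : ∀ w, 0 < c w) (hk : ∀ w, 1 ≤ k w) (hβ : 1 < β) (hμ : ∀ w, c w < μ)
    (hadj : G.Adj u v) (hlev : ℓ u ≤ ℓ v) :
    vertexWeight G β μ k ℓ u - μ * β ^ (-(ℓ v : ℤ))
        ≤ vertexWeight G β μ k (Function.update ℓ v (ℓ v + 1)) u ∧
    (β ^ (ℓ u + 1) / (μ * (β - 1))) *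
        max 0 (vertexWeight G β μ k ℓ u
          - vertexWeight G β μ k (Function.update ℓ v (ℓ v + 1)) u)
      ≤ β / (β - 1) :=
  level_up_neighbor_effect_general G c k β μ ℓ u v hc hβ hμ hadj hlev
end

section
/- Capacitated set cover (hypergraph) approximation bound: let ε ≥ 1 and let an ε-tight valid level scheme on the hypergraph H with consistent edge assignment δ be given. Then Σ_{v : δ(v) ≠ ∅} ⌈|δ(v)|/k_v⌉·c_v ≤ ε·(2β/(β − 1) + f − 1)·Σ_{e ∈ E} μ·β^(−ℓ(e)). -/
/-!
Tightness gives `c_v < ε W_v` whenever `δ(v) ≠ ∅`, and the cost of `v` is charged to hyperedges.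
If `|δ(v)| ≤ k_v` (`v` is light) the cost is `c_v`, and `W_v` is at most the weight
`Σ_{e ∋ v} μ β^{-ℓ(e)}` of the edges at `v`. If `v` is heavy, `⌈|δ(v)|/k_v⌉ ≤ 2|δ(v)|/k_v`; every
edge at `v` has level at least `ℓ(v)`, so a geometric series gives
`W_v ≤ k_v μ β^{-ℓ(v)} β/(β-1)`, and every edge of `δ(v)` has level exactly `ℓ(v)`, so the cost is
at most `ε · 2β/(β-1) · Σ_{e ∈ δ(v)} μ β^{-ℓ(e)}`. An edge is charged by at most `f` light
vertices or, when its owner `A e` is heavy, by the owner (with factor `2β/(β-1)`) and at most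
`f - 1` light vertices.
-/

open scoped Classical

/-- `D̂_v(i)`: the number of hyperedges of `E` containing `v` whose level (the maximum level of
their vertices) equals `i`. -/
noncomputable def hyperIncCount {V : Type*} (E : Finset (Finset V))
    (ℓ : V → ℕ) (v : V) (i : ℕ) : ℕ :=
  (E.filter fun e => v ∈ e ∧ e.sup ℓ = i).card

/-- The weight of a vertex `v` in the hypergraph: `W_v = Σ_i min{k_v, D̂_v(i)}·μ·β^(−i)`. -/
noncomputable def hyperWeight {V : Type*} (E : Finset (Finset V))
    (β μ : ℝ) (k : V → ℕ) (ℓ : V → ℕ) (v : V) : ℝ :=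
  ∑' i : ℕ, (min (k v) (hyperIncCount E ℓ v i) : ℝ) * μ * β ^ (-(i : ℤ))

open Finset

namespace Finset

variable {V : Type*}

theorem card_filter_mem_lt_card {L e : Finset V} {a : V} (ha : a ∈ e) (haL : a ∉ L) :
    #{v ∈ L | v ∈ e} < #e :=
  card_lt_card <| (ssubset_iff_of_subset fun _ hv => (mem_filter.mp hv).2).mpr
    ⟨a, ha, fun h => haL (mem_filter.mp h).1⟩

theorem sum_sum_filter_mem_eq_sum_card_mul (E : Finset (Finset V)) (L : Finset V)
    (w : Finset V → ℝ) :
    ∑ v ∈ L, ∑ e ∈ E with v ∈ e, w e = ∑ e ∈ E, #{v ∈ L | v ∈ e} * w e := by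
  rw [sum_comm' (t' := E) (s' := fun e => {v ∈ L | v ∈ e}) fun v e => by
    simp only [mem_filter]; tauto]
  simp only [sum_const, nsmul_eq_mul]

end Finset

section LevelScheme

variable {V : Type*} (E : Finset (Finset V)) (ℓ : V → ℕ)

theorem hasSum_hyperIncCount_mul (x : ℕ → ℝ) (v : V) :
    HasSum (fun i => (hyperIncCount E ℓ v i : ℝ) * x i) (∑ e ∈ E with v ∈ e, x (e.sup ℓ)) := by
  convert hasSum_sum fun e (_ : e ∈ E.filter (v ∈ ·)) => hasSum_ite_eq (e.sup ℓ) (x (e.sup ℓ))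
    using 2 with i
  rw [sum_ite, sum_const_zero, add_zero, filter_filter,
    sum_congr rfl fun e he => congrArg x (mem_filter.mp he).2.2.symm, sum_const, nsmul_eq_mul,
    hyperIncCount]
  simp_rw [eq_comm]

theorem hyperIncCount_eq_zero_of_lt {v : V} {i : ℕ} (hi : i < ℓ v) :
    hyperIncCount E ℓ v i = 0 := by
  rw [hyperIncCount, card_eq_zero, filter_eq_empty_iff]
  rintro e - ⟨hv, rfl⟩
  exact hi.not_ge (le_sup hv)

variable {β μ : ℝ} (k : V → ℕ)

theorem summable_hyperWeight (hβ : 0 < β) (hμ : 0 ≤ μ) (v : V) :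
    Summable fun i : ℕ => (min (k v) (hyperIncCount E ℓ v i) : ℝ) * μ * β ^ (-(i : ℤ)) := by
  refine .of_nonneg_of_le (fun i => by positivity) (fun i => ?_)
    (hasSum_hyperIncCount_mul E ℓ (fun i => μ * β ^ (-(i : ℤ))) v).summable
  rw [mul_assoc]
  gcongr
  exact min_le_right _ _

theorem hyperWeight_le_sum_incident (hβ : 0 < β) (hμ : 0 ≤ μ) (v : V) :
    hyperWeight E β μ k ℓ v ≤ ∑ e ∈ E with v ∈ e, μ * β ^ (-((e.sup ℓ : ℕ) : ℤ)) := by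
  refine hasSum_le (fun i => ?_) (summable_hyperWeight E ℓ k hβ hμ v).hasSum
    (hasSum_hyperIncCount_mul E ℓ (fun i => μ * β ^ (-(i : ℤ))) v)
  rw [mul_assoc]
  gcongr
  exact min_le_right _ _

theorem hyperWeight_le_geometric (hβ : 1 < β) (hμ : 0 ≤ μ) (v : V) :
    hyperWeight E β μ k ℓ v ≤ k v * μ * β ^ (-(ℓ v : ℤ)) * (β / (β - 1)) := by
  have hβ0 : 0 < β := zero_lt_one.trans hβ
  have hr : β⁻¹ < 1 := inv_lt_one_of_one_lt₀ hβ
  have hshift (j : ℕ) : β ^ (-((j + ℓ v : ℕ) : ℤ)) = β ^ (-(ℓ v : ℤ)) * β⁻¹ ^ j := by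
    rw [Nat.cast_add, neg_add, zpow_add₀ hβ0.ne', mul_comm, zpow_neg, zpow_natCast, inv_pow,
      zpow_neg, zpow_natCast]
  have hgeom : Summable fun j : ℕ => β⁻¹ ^ j := summable_geometric_of_lt_one (by positivity) hr
  have hW := summable_hyperWeight E ℓ k hβ0 hμ v
  rw [hyperWeight, ← hW.sum_add_tsum_nat_add (ℓ v), sum_eq_zero fun i hi => by
    rw [hyperIncCount_eq_zero_of_lt E ℓ (mem_range.mp hi)]; simp, zero_add]
  calc ∑' j : ℕ,
        (min (k v) (hyperIncCount E ℓ v (j + ℓ v)) : ℝ) * μ * β ^ (-((j + ℓ v : ℕ) : ℤ))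
      ≤ ∑' j : ℕ, k v * μ * β ^ (-(ℓ v : ℤ)) * β⁻¹ ^ j := by
        refine Summable.tsum_le_tsum (fun j => ?_) (hW.comp_injective (add_left_injective _))
          (hgeom.mul_left _)
        rw [hshift, ← mul_assoc]
        gcongr
        exact_mod_cast min_le_left _ _
    _ = k v * μ * β ^ (-(ℓ v : ℤ)) * (β / (β - 1)) := by
        rw [hgeom.tsum_mul_left, tsum_geometric_of_lt_one (by positivity) hr]
        have : β - 1 ≠ 0 := by linarith
        field_simp

end LevelScheme

section Charging

variable {V : Type*} (E : Finset (Finset V)) (A : Finset V → V)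

theorem sum_charge_le (S : Finset V) (p : V → Prop) [DecidablePred p] (w : Finset V → ℝ)
    {f : ℕ} {G : ℝ} (hA : ∀ e ∈ E, A e ∈ e) (hE : ∀ e ∈ E, #e ≤ f) (hw : ∀ e ∈ E, 0 ≤ w e)
    (hG : 1 ≤ G) :
    ∑ v ∈ S, (if p v then G * ∑ e ∈ E with A e = v, w e else ∑ e ∈ E with v ∈ e, w e)
      ≤ (G + f - 1) * ∑ e ∈ E, w e := by
  set H := S.filter p
  set L := S.filter (¬p ·)
  have hedge : ∀ e ∈ E, (if A e ∈ H then G else 0) + #{v ∈ L | v ∈ e} ≤ G + f - 1 := by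
    intro e he
    have hef : (#e : ℝ) ≤ f := by exact_mod_cast hE e he
    split_ifs with hH
    · have hAL : A e ∉ L := fun h => (mem_filter.mp h).2 (mem_filter.mp hH).2
      have : (#{v ∈ L | v ∈ e} : ℝ) + 1 ≤ #e := by
        exact_mod_cast card_filter_mem_lt_card (hA e he) hAL
      linarith
    · have : (#{v ∈ L | v ∈ e} : ℝ) ≤ #e := by
        exact_mod_cast card_le_card fun v hv => (mem_filter.mp hv).2
      linarith
  calc ∑ v ∈ S, (if p v then G * ∑ e ∈ E with A e = v, w e else ∑ e ∈ E with v ∈ e, w e)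
      = G * ∑ e ∈ E with A e ∈ H, w e + ∑ e ∈ E, #{v ∈ L | v ∈ e} * w e := by
        rw [sum_ite, ← mul_sum, ← sum_sum_filter_mem_eq_sum_card_mul]
        congr 2
        convert sum_fiberwise_eq_sum_filter E H A w
    _ = ∑ e ∈ E, ((if A e ∈ H then G else 0) + #{v ∈ L | v ∈ e}) * w e := by
        simp only [add_mul, sum_add_distrib, ite_mul, zero_mul, mul_sum, sum_filter, mul_ite,
          mul_zero]
    _ ≤ ∑ e ∈ E, (G + f - 1) * w e :=
        sum_le_sum fun e he => by gcongr; exacts [hw e he, hedge e he]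
    _ = (G + f - 1) * ∑ e ∈ E, w e := (mul_sum ..).symm

variable {β μ ε : ℝ} (k ℓ : V → ℕ)

theorem ceil_mul_le_charge (hβ : 1 < β) (hμ : 0 ≤ μ) (hε : 0 < ε) {v : V} {c : ℝ} (hc : 0 ≤ c)
    (hk : 1 ≤ k v) (hA : ∀ e ∈ E, A e = v → e.sup ℓ = ℓ v) (hd : 0 < #{e ∈ E | A e = v})
    (hcW : c < ε * hyperWeight E β μ k ℓ v) :
    (⌈(#{e ∈ E | A e = v} : ℝ) / k v⌉₊ : ℝ) * c
      ≤ ε * if k v < #{e ∈ E | A e = v}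
        then 2 * β / (β - 1) * ∑ e ∈ E with A e = v, μ * β ^ (-((e.sup ℓ : ℕ) : ℤ))
        else ∑ e ∈ E with v ∈ e, μ * β ^ (-((e.sup ℓ : ℕ) : ℤ)) := by
  set d := #{e ∈ E | A e = v}
  have hk0 : (0 : ℝ) < k v := by exact_mod_cast hk
  have hβ1 : 0 < β - 1 := sub_pos.mpr hβ
  split_ifs with heavy
  · have hassigned : ∑ e ∈ E with A e = v, μ * β ^ (-((e.sup ℓ : ℕ) : ℤ))
        = d * (μ * β ^ (-(ℓ v : ℤ))) := by
      rw [sum_congr rfl fun e he => by rw [hA e (mem_filter.mp he).1 (mem_filter.mp he).2],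
        sum_const, nsmul_eq_mul]
    have hceil : (⌈(d : ℝ) / k v⌉₊ : ℝ) ≤ 2 * (d / k v) := by
      refine Nat.ceil_le_two_mul ?_
      rw [le_div_iff₀ hk0]
      have : (k v : ℝ) + 1 ≤ d := by exact_mod_cast heavy
      linarith
    calc (⌈(d : ℝ) / k v⌉₊ : ℝ) * c
        ≤ 2 * (d / k v) * (ε * (k v * μ * β ^ (-(ℓ v : ℤ)) * (β / (β - 1)))) := by
          gcongr
          exact hcW.le.trans (by gcongr; exact hyperWeight_le_geometric E ℓ k hβ hμ v)
      _ = ε * (2 * β / (β - 1) * (d * (μ * β ^ (-(ℓ v : ℤ))))) := by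
          field_simp
      _ = _ := by rw [hassigned]
  · have hceil : ⌈(d : ℝ) / k v⌉₊ = 1 := by
      rw [Nat.ceil_eq_iff one_ne_zero, Nat.sub_self, Nat.cast_zero, Nat.cast_one,
        div_le_one hk0, div_pos_iff_of_pos_right hk0]
      exact ⟨by exact_mod_cast hd, by exact_mod_cast not_lt.mp heavy⟩
    rw [hceil, Nat.cast_one, one_mul]
    exact hcW.le.trans (by gcongr; exact hyperWeight_le_sum_incident E ℓ k (by linarith) hμ v)

end Charging

theorem capacitated_set_cover_bound_general {V : Type*} [Fintype V] (E : Finset (Finset V)) (f : ℕ)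
    (c : V → ℝ) (k : V → ℕ) (β μ ε : ℝ) (ℓ : V → ℕ) (A : Finset V → V)
    (hc : ∀ v, 0 < c v) (hk : ∀ v, 1 ≤ k v) (hβ : 1 < β) (hμ : ∀ v, c v < μ) (hε : 1 ≤ ε)
    -- every hyperedge contains at least one and at most `f` vertices
    (hE : ∀ e ∈ E, 1 ≤ e.card ∧ e.card ≤ f)
    -- `A` assigns each hyperedge to exactly one of its vertices, whose level is the edge level
    (hA : ∀ e ∈ E, A e ∈ e ∧ ℓ (A e) = e.sup ℓ)
    -- and `ε`-tight
    (htight : ∀ v, 0 < (E.filter fun e => A e = v).card → c v / ε < hyperWeight E β μ k ℓ v) :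
    ∑ v ∈ Finset.univ.filter (fun v => 0 < (E.filter fun e => A e = v).card),
        (⌈((E.filter fun e => A e = v).card : ℝ) / (k v : ℝ)⌉₊ : ℝ) * c v
      ≤ ε * (2 * β / (β - 1) + (f : ℝ) - 1) * ∑ e ∈ E, μ * β ^ (-((e.sup ℓ : ℕ) : ℤ)) := by
  have hε0 : 0 < ε := zero_lt_one.trans_le hε
  have hμ0 (v : V) : 0 ≤ μ := ((hc v).trans (hμ v)).le
  have hG : 1 ≤ 2 * β / (β - 1) := by rw [le_div_iff₀ (by linarith)]; linarith
  calc _ ≤ ∑ v ∈ univ with 0 < #{e ∈ E | A e = v}, ε *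
          (if k v < #{e ∈ E | A e = v}
            then 2 * β / (β - 1) * ∑ e ∈ E with A e = v, μ * β ^ (-((e.sup ℓ : ℕ) : ℤ))
            else ∑ e ∈ E with v ∈ e, μ * β ^ (-((e.sup ℓ : ℕ) : ℤ))) := by
        refine sum_le_sum fun v hv => ceil_mul_le_charge E A k ℓ hβ (hμ0 v) hε0 (hc v).le (hk v)
          (fun e he hAe => hAe ▸ (hA e he).2.symm) (mem_filter.mp hv).2 ?_
        rw [← div_lt_iff₀' hε0]
        exact htight v (mem_filter.mp hv).2
    _ ≤ _ := by
        rw [← mul_sum, mul_assoc]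
        gcongr
        exact sum_charge_le E A _ _ _ (fun e he => (hA e he).1) (fun e he => (hE e he).2)
          (fun e _ => mul_nonneg (hμ0 (A e)) (zpow_nonneg (by linarith) _)) hG

/-- Capacitated set cover (hypergraph) approximation bound: given an `ε`-tight valid level scheme
on the hypergraph `H = (V, E)` (each hyperedge containing at least one and at most `f` vertices)
with consistent edge assignment `δ(v) = {e ∈ E | A e = v}`,
`Σ_{v : δ(v) ≠ ∅} ⌈|δ(v)|/k_v⌉·c_v ≤ ε·(2β/(β − 1) + f − 1)·Σ_{e ∈ E} μ·β^(−ℓ(e))`. -/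
theorem capacitated_set_cover_bound {V : Type*} [Fintype V] (E : Finset (Finset V)) (f : ℕ)
    (c : V → ℝ) (k : V → ℕ) (β μ ε : ℝ) (ℓ : V → ℕ) (A : Finset V → V)
    (hc : ∀ v, 0 < c v) (hk : ∀ v, 1 ≤ k v) (hβ : 1 < β) (hμ : ∀ v, c v < μ) (hε : 1 ≤ ε)
    -- every hyperedge contains at least one and at most `f` vertices
    (hE : ∀ e ∈ E, 1 ≤ e.card ∧ e.card ≤ f)
    -- `A` assigns each hyperedge to exactly one of its vertices, whose level is the edge level
    (hA : ∀ e ∈ E, A e ∈ e ∧ ℓ (A e) = e.sup ℓ)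
    -- the scheme is valid
    (hvalid : ∀ v, hyperWeight E β μ k ℓ v ≤ c v)
    -- and `ε`-tight
    (htight : ∀ v, 0 < (E.filter fun e => A e = v).card → c v / ε < hyperWeight E β μ k ℓ v) :
    ∑ v ∈ Finset.univ.filter (fun v => 0 < (E.filter fun e => A e = v).card),
        (⌈((E.filter fun e => A e = v).card : ℝ) / (k v : ℝ)⌉₊ : ℝ) * c v
      ≤ ε * (2 * β / (β - 1) + (f : ℝ) - 1) * ∑ e ∈ E, μ * β ^ (-((e.sup ℓ : ℕ) : ℤ)) :=
  capacitated_set_cover_bound_general E f c k β μ ε ℓ A hc hk hβ hμ hε hE hA htight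
end

section
/- Dual feasibility for the demand version: given a valid level scheme on G (with demand-based weights) and a consistent edge assignment δ, define for each vertex v: if Σ_{e ∈ δ(v)} d_e > k_v, set q_v = μ·β^(−ℓ(v)) and l_{ev} = 0 for all edges e ∋ v; otherwise set q_v = μ·Σ_{i : S_v(i) ≥ k_v} β^(−i), and for each edge e ∋ v set l_{ev} = 0 if S_v(ℓ(e)) ≥ k_v and l_{ev} = d_e·μ·β^(−ℓ(e)) otherwise. Also set π_e = d_e·μ·β^(−ℓ(e)) for each edge e. Then q_v ≥ 0, l_{ev} ≥ 0, π_e ≥ 0, k_v·q_v + Σ_{e ∋ v} l_{ev} ≤ c_v for every vertex v, and q_v·d_e + l_{ev} ≥ π_e for every incidence v ∈ e ∈ E. -/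
open scoped Classical

/-- `S_v(i)`: the total demand of the edges incident to `v` whose edge level equals `i`,
where the level of an edge is the maximum level of its two endpoints. -/
noncomputable def demLevelSum {V : Type*} [Fintype V] (G : SimpleGraph V)
    (d : Sym2 V → ℝ) (ℓ : V → ℕ) (v : V) (i : ℕ) : ℝ :=
  ∑ u ∈ Finset.univ.filter (fun u => G.Adj v u ∧ max (ℓ u) (ℓ v) = i), d s(u, v)

/-- The demand-based weight of a vertex `v`: `W_v = Σ_i min{k_v, S_v(i)}·μ·β^(−i)`. -/
noncomputable def demWeight {V : Type*} [Fintype V] (G : SimpleGraph V)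
    (d : Sym2 V → ℝ) (β μ : ℝ) (k : V → ℝ) (ℓ : V → ℕ) (v : V) : ℝ :=
  ∑' i : ℕ, min (k v) (demLevelSum G d ℓ v i) * μ * β ^ (-(i : ℤ))

/-- `Σ_{e ∈ δ(v)} d_e`: the total demand of the edges assigned to `v` by the assignment `A`,
where `A u v` means that the edge `{u, v}` is assigned to its endpoint `v`. -/
noncomputable def assignedDemand {V : Type*} [Fintype V] (G : SimpleGraph V)
    (d : Sym2 V → ℝ) (A : V → V → Prop) (v : V) : ℝ :=
  ∑ u ∈ Finset.univ.filter (fun u => G.Adj v u ∧ A u v), d s(u, v)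

/-- The dual variable `q_v` for the demand version. -/
noncomputable def demQ {V : Type*} [Fintype V] (G : SimpleGraph V)
    (d : Sym2 V → ℝ) (β μ : ℝ) (k : V → ℝ) (ℓ : V → ℕ) (A : V → V → Prop) (v : V) : ℝ :=
  if k v < assignedDemand G d A v then μ * β ^ (-(ℓ v : ℤ))
  else μ * ∑' i : ℕ, if k v ≤ demLevelSum G d ℓ v i then β ^ (-(i : ℤ)) else 0

/-- The dual variable `l_{ev}` for the edge `e = {u, v}` at its endpoint `v`,
for the demand version. -/
noncomputable def demL {V : Type*} [Fintype V] (G : SimpleGraph V)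
    (d : Sym2 V → ℝ) (β μ : ℝ) (k : V → ℝ) (ℓ : V → ℕ) (A : V → V → Prop) (u v : V) : ℝ :=
  if k v < assignedDemand G d A v then 0
  else if k v ≤ demLevelSum G d ℓ v (max (ℓ u) (ℓ v)) then 0
  else d s(u, v) * (μ * β ^ (-(max (ℓ u) (ℓ v) : ℤ)))

/-!
Since `min{k_v, S_v(i)}` is `k_v` on the saturated levels (`S_v(i) ≥ k_v`) and `S_v(i)` on the
others, the weight `W_v` splits into `k_v·q_v` plus `Σ_e l_{ev}` (the unsaturated levels,
regrouped edge by edge) whenever `v` is not overloaded, so the vertex constraint is validity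
itself. An overloaded `v` has all its assigned edges at level `ℓ(v)`, so level `ℓ(v)` is
saturated and the single term `k_v·μ·β^(−ℓ(v))` of `W_v` bounds `k_v·q_v`. For the incidence
constraint, either `l_{ev} = π_e`, or the level of `e` is saturated and `β^(−ℓ(e))` is a term of
`q_v / μ`, or `v` is overloaded and `ℓ(v) ≤ ℓ(e)`.
-/

open Finset

section Geometric

variable {β : ℝ}

lemma summable_zpow_neg_natCast (hβ : 1 < β) : Summable fun i : ℕ => β ^ (-(i : ℤ)) := by
  simp_rw [zpow_neg, zpow_natCast, ← inv_pow]
  exact summable_geometric_of_lt_one (inv_pos.2 (zero_lt_one.trans hβ)).le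
    (inv_lt_one_of_one_lt₀ hβ)

lemma summable_ite_zpow_neg_natCast (hβ : 1 < β) (p : ℕ → Prop) :
    Summable fun i : ℕ => if p i then β ^ (-(i : ℤ)) else 0 := by
  have hβ0 : 0 < β := zero_lt_one.trans hβ
  refine (summable_zpow_neg_natCast hβ).of_nonneg_of_le (fun i => ?_) (fun i => ?_)
  · split_ifs <;> positivity
  · split_ifs <;> first | exact le_rfl | positivity

end Geometric

section Duals

variable {V : Type*} [Fintype V] {G : SimpleGraph V} {d : Sym2 V → ℝ} {β μ : ℝ}
  {k : V → ℝ} {ℓ : V → ℕ} {A : V → V → Prop}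

lemma demLevelSum_nonneg (hd : ∀ e ∈ G.edgeSet, 0 ≤ d e) (v : V) (i : ℕ) :
    0 ≤ demLevelSum G d ℓ v i :=
  sum_nonneg fun _ hu => hd _ (G.mem_edgeSet.2 (mem_filter.1 hu).2.1.symm)

lemma assignedDemand_le_demLevelSum (hd : ∀ e ∈ G.edgeSet, 0 ≤ d e)
    (hAlevel : ∀ u v, G.Adj u v → A u v → ℓ v = max (ℓ u) (ℓ v)) (v : V) :
    assignedDemand G d A v ≤ demLevelSum G d ℓ v (ℓ v) := by
  refine sum_le_sum_of_subset_of_nonneg (fun u hu => ?_)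
    fun _ hu _ => hd _ (G.mem_edgeSet.2 (mem_filter.1 hu).2.1.symm)
  simp only [mem_filter, mem_univ, true_and] at hu ⊢
  exact ⟨hu.1, (hAlevel u v hu.1.symm hu.2).symm⟩

lemma hasSum_demLevelSum_mul (v : V) (g : ℕ → ℝ) :
    HasSum (fun i => demLevelSum G d ℓ v i * g i)
      (∑ u ∈ univ.filter (G.Adj v), d s(u, v) * g (max (ℓ u) (ℓ v))) := by
  have hsplit : ∀ i, demLevelSum G d ℓ v i * g i =
      ∑ u ∈ univ.filter (G.Adj v),
        if i = max (ℓ u) (ℓ v) then d s(u, v) * g (max (ℓ u) (ℓ v)) else 0 := by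
    intro i
    rw [demLevelSum, ← filter_filter, sum_filter, sum_mul]
    refine sum_congr rfl fun u _ => ?_
    split_ifs <;> simp_all [eq_comm]
  simp only [hsplit]
  exact hasSum_sum fun u _ => hasSum_ite_eq _ _

lemma hasSum_demWeight (hβ : 1 < β) (v : V) :
    HasSum (fun i : ℕ => min (k v) (demLevelSum G d ℓ v i) * μ * β ^ (-(i : ℤ)))
      (k v * μ * (∑' i : ℕ, if k v ≤ demLevelSum G d ℓ v i then β ^ (-(i : ℤ)) else 0)
        + ∑ u ∈ univ.filter (G.Adj v), d s(u, v) *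
          (if k v ≤ demLevelSum G d ℓ v (max (ℓ u) (ℓ v)) then 0
            else μ * β ^ (-((max (ℓ u) (ℓ v) : ℕ) : ℤ)))) := by
  refine ((summable_ite_zpow_neg_natCast hβ _).hasSum.mul_left (k v * μ)).add
    (hasSum_demLevelSum_mul v
      fun i => if k v ≤ demLevelSum G d ℓ v i then 0 else μ * β ^ (-(i : ℤ))) |>.congr_fun
    fun i => ?_
  split_ifs with h
  · rw [min_eq_left h]; ring
  · rw [min_eq_right (not_le.1 h).le]; ring

lemma demQ_nonneg (hβ : 0 < β) (hμ : 0 ≤ μ) (v : V) : 0 ≤ demQ G d β μ k ℓ A v := by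
  unfold demQ
  split_ifs
  · positivity
  · exact mul_nonneg hμ (tsum_nonneg fun i => by split_ifs <;> positivity)

lemma demL_nonneg (hβ : 0 < β) (hμ : 0 ≤ μ) {u v : V} (hd : 0 ≤ d s(u, v)) :
    0 ≤ demL G d β μ k ℓ A u v := by
  unfold demL
  split_ifs <;> positivity

lemma k_mul_demQ_add_sum_demL_le_demWeight (hβ : 1 < β) (hμ : 0 ≤ μ)
    (hd : ∀ e ∈ G.edgeSet, 0 ≤ d e)
    (hAlevel : ∀ u v, G.Adj u v → A u v → ℓ v = max (ℓ u) (ℓ v)) {v : V} (hk : 0 ≤ k v) :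
    k v * demQ G d β μ k ℓ A v + ∑ u ∈ univ.filter (G.Adj v), demL G d β μ k ℓ A u v
      ≤ demWeight G d β μ k ℓ v := by
  have hW := hasSum_demWeight (G := G) (d := d) (ℓ := ℓ) (μ := μ) (k := k) hβ v
  by_cases hover : k v < assignedDemand G d A v
  · have hkS : k v ≤ demLevelSum G d ℓ v (ℓ v) :=
      hover.le.trans (assignedDemand_le_demLevelSum hd hAlevel v)
    have hterm := hW.summable.le_tsum (ℓ v) fun i _ => by
      have := demLevelSum_nonneg (ℓ := ℓ) hd v i
      have := zero_lt_one.trans hβ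
      positivity
    rw [min_eq_left hkS, mul_assoc] at hterm
    simpa only [demQ, demL, if_pos hover, sum_const_zero, add_zero, demWeight] using hterm
  · refine le_of_eq ?_
    rw [demWeight, hW.tsum_eq, demQ, if_neg hover]
    congr 1
    · ring
    · refine sum_congr rfl fun u _ => ?_
      rw [demL, if_neg hover]
      split_ifs <;> push_cast <;> ring

lemma le_demQ_mul_add_demL (hβ : 1 < β) (hμ : 0 ≤ μ) {u v : V} (hd : 0 ≤ d s(u, v)) :
    d s(u, v) * (μ * β ^ (-(max (ℓ u) (ℓ v) : ℤ)))
      ≤ demQ G d β μ k ℓ A v * d s(u, v) + demL G d β μ k ℓ A u v := by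
  have hβ0 : 0 < β := zero_lt_one.trans hβ
  unfold demQ demL
  split_ifs with hover hS
  · rw [add_zero, mul_comm]
    gcongr
    · exact hβ.le
    · exact le_max_right _ _
  · have hterm : β ^ (-(max (ℓ u) (ℓ v) : ℤ)) ≤
        ∑' i : ℕ, if k v ≤ demLevelSum G d ℓ v i then β ^ (-(i : ℤ)) else 0 := by
      have := (summable_ite_zpow_neg_natCast hβ (k v ≤ demLevelSum G d ℓ v ·)).le_tsum
        (max (ℓ u) (ℓ v))
        fun i _ => by split_ifs <;> positivity
      rwa [if_pos hS, Nat.cast_max] at this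
    rw [add_zero, mul_comm]
    gcongr
  · exact le_add_of_nonneg_left
      (mul_nonneg (mul_nonneg hμ (tsum_nonneg fun i => by split_ifs <;> positivity)) hd)

end Duals

theorem demand_dual_feasibility_general {V : Type*} [Fintype V] (G : SimpleGraph V)
    (c : V → ℝ) (k : V → ℝ) (d : Sym2 V → ℝ) (β μ : ℝ) (ℓ : V → ℕ) (A : V → V → Prop)
    (hc : ∀ v, 0 < c v) (hk : ∀ v, 0 < k v) (hd : ∀ e ∈ G.edgeSet, 0 < d e)
    (hβ : 1 < β) (hμ : ∀ v, c v < μ)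
    -- the scheme is valid
    (hvalid : ∀ v, demWeight G d β μ k ℓ v ≤ c v)
    -- ... whose level equals the edge level
    (hAlevel : ∀ u v, G.Adj u v → A u v → ℓ v = max (ℓ u) (ℓ v)) :
    (∀ v, 0 ≤ demQ G d β μ k ℓ A v) ∧
    (∀ u v, G.Adj u v → 0 ≤ demL G d β μ k ℓ A u v) ∧
    (∀ u v, G.Adj u v → 0 ≤ d s(u, v) * (μ * β ^ (-(max (ℓ u) (ℓ v) : ℤ)))) ∧
    (∀ v, k v * demQ G d β μ k ℓ A v
        + ∑ u ∈ Finset.univ.filter (fun u => G.Adj v u), demL G d β μ k ℓ A u v ≤ c v) ∧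
    (∀ u v, G.Adj u v →
        d s(u, v) * (μ * β ^ (-(max (ℓ u) (ℓ v) : ℤ)))
          ≤ demQ G d β μ k ℓ A v * d s(u, v) + demL G d β μ k ℓ A u v) := by
  have hβ0 : 0 < β := zero_lt_one.trans hβ
  have hμ0 : ∀ v, 0 ≤ μ := fun v => ((hc v).trans (hμ v)).le
  have hd0 : ∀ e ∈ G.edgeSet, 0 ≤ d e := fun e he => (hd e he).le
  have hdAdj : ∀ u v, G.Adj u v → 0 ≤ d s(u, v) := fun u v h => hd0 _ (G.mem_edgeSet.2 h)
  refine ⟨fun v => demQ_nonneg hβ0 (hμ0 v) v,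
    fun u v h => demL_nonneg hβ0 (hμ0 v) (hdAdj u v h),
    fun u v h => mul_nonneg (hdAdj u v h) (mul_nonneg (hμ0 v) (zpow_pos hβ0 _).le),
    fun v => (k_mul_demQ_add_sum_demL_le_demWeight hβ (hμ0 v) hd0 hAlevel (hk v).le).trans
      (hvalid v),
    fun u v h => le_demQ_mul_add_demL hβ (hμ0 v) (hdAdj u v h)⟩

/-- Dual feasibility for the demand version: given a valid level scheme on `G` (with demand-based
weights) and a consistent edge assignment, the prescribed `(q, l, π)` with
`π_e = d_e·μ·β^(−ℓ(e))` satisfies all dual constraints, where the incidence constraint reads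
`q_v·d_e + l_{ev} ≥ π_e`. -/
theorem demand_dual_feasibility {V : Type*} [Fintype V] (G : SimpleGraph V)
    (c : V → ℝ) (k : V → ℝ) (d : Sym2 V → ℝ) (β μ : ℝ) (ℓ : V → ℕ) (A : V → V → Prop)
    (hc : ∀ v, 0 < c v) (hk : ∀ v, 0 < k v) (hd : ∀ e ∈ G.edgeSet, 0 < d e)
    (hβ : 1 < β) (hμ : ∀ v, c v < μ)
    -- the scheme is valid
    (hvalid : ∀ v, demWeight G d β μ k ℓ v ≤ c v)
    -- `A` assigns each edge to exactly one of its endpoints ...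
    (hA : ∀ u v, G.Adj u v → (A u v ∧ ¬ A v u) ∨ (A v u ∧ ¬ A u v))
    -- ... whose level equals the edge level
    (hAlevel : ∀ u v, G.Adj u v → A u v → ℓ v = max (ℓ u) (ℓ v)) :
    (∀ v, 0 ≤ demQ G d β μ k ℓ A v) ∧
    (∀ u v, G.Adj u v → 0 ≤ demL G d β μ k ℓ A u v) ∧
    (∀ u v, G.Adj u v → 0 ≤ d s(u, v) * (μ * β ^ (-(max (ℓ u) (ℓ v) : ℤ)))) ∧
    (∀ v, k v * demQ G d β μ k ℓ A v
        + ∑ u ∈ Finset.univ.filter (fun u => G.Adj v u), demL G d β μ k ℓ A u v ≤ c v) ∧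
    (∀ u v, G.Adj u v →
        d s(u, v) * (μ * β ^ (-(max (ℓ u) (ℓ v) : ℤ)))
          ≤ demQ G d β μ k ℓ A v * d s(u, v) + demL G d β μ k ℓ A u v) :=
  demand_dual_feasibility_general G c k d β μ ℓ A hc hk hd hβ hμ hvalid hAlevel
end
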